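/- Uniqueness of bounded exact invariants for almost surely terminating loops: suppose ∑' τ, W σ τ = 1 for every σ (the loop is AST), and suppose there is a constant k : ℝ≥0 such that the post-expectation E : Σ → ℝ≥0∞ satisfies E σ ≤ k for all σ. Then for every expectation I : Σ → ℝ≥0∞ with I σ ≤ k for all σ, one has I = Φ_E I if and only if I = lfp Φ_E. In particular, the loop has exactly one exact invariant bounded by k with respect to E, namely its weakest pre-expectation lfp Φ_E. -/

import Mathlib

open ENNReal NNReal

/-- The characteristic function of the loop `while G do body` with respect to
post-expectation `E`. -/
noncomputable def Phi {S : Type*} (G : S → Prop) [DecidablePred G] (body : S → PMF S)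
    (E : S → ℝ≥0∞) (X : S → ℝ≥0∞) : S → ℝ≥0∞ :=
  fun σ => if G σ then ∑' τ, body σ τ * X τ else E σ

theorem Phi_monotone {S : Type*} (G : S → Prop) [DecidablePred G] (body : S → PMF S)
    (E : S → ℝ≥0∞) : Monotone (Phi G body E) := by
  intro X Y hXY σ
  simp only [Phi]
  split
  · exact ENNReal.tsum_le_tsum fun τ => by gcongr <;> exact hXY τ
  · exact le_rfl

/-- The characteristic function, bundled as a monotone map on the complete
lattice of expectations. -/
noncomputable def PhiHom {S : Type*} (G : S → Prop) [DecidablePred G] (body : S → PMF S)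
    (E : S → ℝ≥0∞) : (S → ℝ≥0∞) →o (S → ℝ≥0∞) :=
  ⟨Phi G body E, Phi_monotone G body E⟩

/-- The stopped `n`-step kernels of the loop `while G do body`. -/
noncomputable def mu {S : Type*} (G : S → Prop) [DecidablePred G] [DecidableEq S]
    (body : S → PMF S) : ℕ → S → S → ℝ≥0∞
  | 0 => fun σ τ => if ¬ G σ ∧ τ = σ then 1 else 0
  | n + 1 => fun σ =>
      if G σ then (fun τ => ∑' σ', body σ σ' * mu G body n σ' τ) else mu G body 0 σ

/-- The loop's output sub-distribution. -/
noncomputable def W {S : Type*} (G : S → Prop) [DecidablePred G] [DecidableEq S]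
    (body : S → PMF S) (σ τ : S) : ℝ≥0∞ :=
  ⨆ n, mu G body n σ τ

/-! Under AST the weight `∑' τ, μₙ σ τ` of the runs that have stopped within `n` steps tends to `1`.
For a sub-invariant `X ≤ Φ X` bounded by `k`, the mass not yet stopped contributes at most `k`, so
`X σ + k ⋅ ∑' τ, μₙ σ τ ≤ ∑' τ, μₙ σ τ ⋅ E τ + k`, while for a super-invariant `Φ Y ≤ Y` the stopped
mass alone gives `∑' τ, μₙ σ τ ⋅ E τ ≤ Y σ`. Letting `n → ∞` and cancelling `k` yields `X ≤ Y`;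
applied to a bounded exact invariant and `lfp Φ_E` this gives uniqueness. -/

theorem ENNReal.tsum_iSup_of_monotone {α ι : Type*} [Preorder ι] [IsDirectedOrder ι]
    {f : ι → α → ℝ≥0∞} (hf : ∀ a, Monotone fun i => f i a) :
    ∑' a, ⨆ i, f i a = ⨆ i, ∑' a, f i a := by
  refine le_antisymm ?_ (iSup_le fun i => ENNReal.tsum_le_tsum fun a => le_iSup (f · a) i)
  rw [ENNReal.tsum_eq_iSup_sum]
  refine iSup_le fun s => ?_
  rw [ENNReal.finsetSum_iSup_of_monotone (f := fun a i => f i a) hf]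
  exact iSup_mono fun i => ENNReal.sum_le_tsum s

section Loop

variable {S : Type*} {G : S → Prop} [DecidablePred G] {body : S → PMF S}

theorem Phi_apply_of_guard {E X : S → ℝ≥0∞} {σ : S} (h : G σ) :
    Phi G body E X σ = ∑' τ, body σ τ * X τ := if_pos h

theorem Phi_apply_of_not_guard {E X : S → ℝ≥0∞} {σ : S} (h : ¬ G σ) :
    Phi G body E X σ = E σ := if_neg h

theorem post_le_of_Phi_le {E X : S → ℝ≥0∞} (hX : Phi G body E X ≤ X) {σ : S} (h : ¬ G σ) :
    E σ ≤ X σ :=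
  (Phi_apply_of_not_guard h).symm.trans_le (hX σ)

theorem le_post_of_le_Phi {E X : S → ℝ≥0∞} (hX : X ≤ Phi G body E X) {σ : S} (h : ¬ G σ) :
    X σ ≤ E σ :=
  (hX σ).trans_eq (Phi_apply_of_not_guard h)

variable [DecidableEq S]

theorem mu_zero_of_guard {σ : S} (h : G σ) (τ : S) : mu G body 0 σ τ = 0 := by
  simp [mu, h]

theorem mu_succ_of_guard {σ : S} (h : G σ) (n : ℕ) (τ : S) :
    mu G body (n + 1) σ τ = ∑' σ', body σ σ' * mu G body n σ' τ := by
  simp [mu, h]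

theorem mu_of_not_guard {σ : S} (h : ¬ G σ) (n : ℕ) (τ : S) :
    mu G body n σ τ = if τ = σ then 1 else 0 := by
  cases n <;> simp [mu, h]

theorem tsum_mu_mul_of_not_guard {σ : S} (h : ¬ G σ) (n : ℕ) (f : S → ℝ≥0∞) :
    ∑' τ, mu G body n σ τ * f τ = f σ := by
  simp [mu_of_not_guard h]

theorem tsum_mu_of_not_guard {σ : S} (h : ¬ G σ) (n : ℕ) : ∑' τ, mu G body n σ τ = 1 := by
  simpa using tsum_mu_mul_of_not_guard (body := body) h n 1

theorem tsum_mu_succ_mul_of_guard {σ : S} (h : G σ) (n : ℕ) (f : S → ℝ≥0∞) :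
    ∑' τ, mu G body (n + 1) σ τ * f τ = ∑' σ', body σ σ' * ∑' τ, mu G body n σ' τ * f τ := by
  simp_rw [mu_succ_of_guard h, ← ENNReal.tsum_mul_right, mul_assoc, ← ENNReal.tsum_mul_left]
  exact ENNReal.tsum_comm

theorem tsum_mu_succ_of_guard {σ : S} (h : G σ) (n : ℕ) :
    ∑' τ, mu G body (n + 1) σ τ = ∑' σ', body σ σ' * ∑' τ, mu G body n σ' τ := by
  simpa using tsum_mu_succ_mul_of_guard h n 1

theorem monotone_mu (σ τ : S) : Monotone fun n => mu G body n σ τ := by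
  refine monotone_nat_of_le_succ fun n => ?_
  induction n generalizing σ with
  | zero =>
    by_cases h : G σ
    · simp [mu_zero_of_guard h]
    · simp [mu_of_not_guard h]
  | succ n ih =>
    by_cases h : G σ
    · simp only [mu_succ_of_guard h]
      gcongr with σ'
      exact ih σ'
    · simp [mu_of_not_guard h]

theorem iSup_tsum_mu (σ : S) : ⨆ n, ∑' τ, mu G body n σ τ = ∑' τ, W G body σ τ :=
  (ENNReal.tsum_iSup_of_monotone (monotone_mu σ)).symm

theorem tsum_mu_mul_le_of_Phi_le {E X : S → ℝ≥0∞} (hX : Phi G body E X ≤ X) (n : ℕ) (σ : S) :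
    ∑' τ, mu G body n σ τ * E τ ≤ X σ := by
  have stopped : ∀ m σ, ¬ G σ → ∑' τ, mu G body m σ τ * E τ ≤ X σ := fun m σ h =>
    (tsum_mu_mul_of_not_guard h m E).trans_le (post_le_of_Phi_le hX h)
  induction n generalizing σ with
  | zero =>
    by_cases h : G σ
    · simp [mu_zero_of_guard h]
    · exact stopped 0 σ h
  | succ n ih =>
    by_cases h : G σ
    · calc ∑' τ, mu G body (n + 1) σ τ * E τ
          = ∑' σ', body σ σ' * ∑' τ, mu G body n σ' τ * E τ := tsum_mu_succ_mul_of_guard h n E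
        _ ≤ ∑' σ', body σ σ' * X σ' := by gcongr with σ'; exact ih σ'
        _ = Phi G body E X σ := (Phi_apply_of_guard h).symm
        _ ≤ X σ := hX σ
    · exact stopped (n + 1) σ h

theorem add_mul_tsum_mu_le_of_le_Phi {E X : S → ℝ≥0∞} {k : ℝ≥0∞} (hX : X ≤ Phi G body E X)
    (hXk : ∀ σ, X σ ≤ k) (n : ℕ) (σ : S) :
    X σ + k * ∑' τ, mu G body n σ τ ≤ ∑' τ, mu G body n σ τ * E τ + k := by
  have stopped : ∀ m σ, ¬ G σ →
      X σ + k * ∑' τ, mu G body m σ τ ≤ ∑' τ, mu G body m σ τ * E τ + k := fun m σ h => by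
    rw [tsum_mu_of_not_guard h, tsum_mu_mul_of_not_guard h, mul_one]
    gcongr
    exact le_post_of_le_Phi hX h
  induction n generalizing σ with
  | zero =>
    by_cases h : G σ
    · simpa [mu_zero_of_guard h] using hXk σ
    · exact stopped 0 σ h
  | succ n ih =>
    by_cases h : G σ
    · calc X σ + k * ∑' τ, mu G body (n + 1) σ τ
          ≤ ∑' σ', body σ σ' * X σ' + k * ∑' σ', body σ σ' * ∑' τ, mu G body n σ' τ := by
            rw [tsum_mu_succ_of_guard h]
            gcongr
            exact (hX σ).trans_eq (Phi_apply_of_guard h)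
        _ = ∑' σ', body σ σ' * (X σ' + k * ∑' τ, mu G body n σ' τ) := by
            rw [← ENNReal.tsum_mul_left, ← ENNReal.tsum_add]
            congr 1
            ext σ'
            ring
        _ ≤ ∑' σ', body σ σ' * (∑' τ, mu G body n σ' τ * E τ + k) := by
            gcongr ∑' σ', _ * ?_ with σ'
            exact ih σ'
        _ = ∑' τ, mu G body (n + 1) σ τ * E τ + k := by
            simp_rw [tsum_mu_succ_mul_of_guard h, mul_add, ENNReal.tsum_add,
              ENNReal.tsum_mul_right, PMF.tsum_coe, one_mul]
    · exact stopped (n + 1) σ h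

theorem le_of_le_Phi_of_Phi_le (hAST : ∀ σ : S, ∑' τ, W G body σ τ = 1) {k : ℝ≥0}
    {E X Y : S → ℝ≥0∞} (hX : X ≤ Phi G body E X) (hXk : ∀ σ, X σ ≤ k)
    (hY : Phi G body E Y ≤ Y) : X ≤ Y := by
  intro σ
  refine (ENNReal.add_le_add_iff_right (coe_ne_top (r := k))).1 ?_
  calc X σ + k = ⨆ n, X σ + k * ∑' τ, mu G body n σ τ := by
        rw [← ENNReal.add_iSup, ← ENNReal.mul_iSup, iSup_tsum_mu, hAST, mul_one]
    _ ≤ Y σ + k := iSup_le fun n => (add_mul_tsum_mu_le_of_le_Phi hX hXk n σ).trans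
        (add_le_add_left (tsum_mu_mul_le_of_Phi_le hY n σ) _)

end Loop

theorem exact_invariant_unique_of_AST_general {S : Type*} [DecidableEq S]
    (G : S → Prop) [DecidablePred G] (body : S → PMF S)
    (hAST : ∀ σ : S, ∑' τ, W G body σ τ = 1)
    (k : ℝ≥0) (E : S → ℝ≥0∞) :
    ∀ I : S → ℝ≥0∞, (∀ σ, I σ ≤ (k : ℝ≥0∞)) →
      (I = Phi G body E I ↔ I = OrderHom.lfp (PhiHom G body E)) := by
  intro I hIk
  have hlfp : Phi G body E (OrderHom.lfp (PhiHom G body E)) = OrderHom.lfp (PhiHom G body E) :=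
    OrderHom.map_lfp (PhiHom G body E)
  constructor
  · intro hI
    exact le_antisymm (le_of_le_Phi_of_Phi_le hAST hI.le hIk hlfp.le)
      (OrderHom.lfp_le_fixed _ hI.symm)
  · rintro rfl
    exact hlfp.symm

/-- uniqueness of bounded exact invariants for almost surely
terminating loops. -/
theorem exact_invariant_unique_of_AST {S : Type*} [Countable S] [DecidableEq S]
    (G : S → Prop) [DecidablePred G] (body : S → PMF S)
    (hAST : ∀ σ : S, ∑' τ, W G body σ τ = 1)
    (k : ℝ≥0) (E : S → ℝ≥0∞) (hE : ∀ σ, E σ ≤ (k : ℝ≥0∞)) :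
    ∀ I : S → ℝ≥0∞, (∀ σ, I σ ≤ (k : ℝ≥0∞)) →
      (I = Phi G body E I ↔ I = OrderHom.lfp (PhiHom G body E)) :=
  exact_invariant_unique_of_AST_general G body hAST k E
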